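/- Let n ≥ 4 be an integer and let d₁, ..., d_{n-3} be positive integers. Then n(n+1)/2 - Σ_{i<j}dᵢdⱼ - (n+1)·Σⱼdⱼ + (Σⱼdⱼ)² > 0. -/

import Mathlib

/-!
Writing `S = ∑ dⱼ` and `Q = ∑ dⱼ²`, the pair sum is `(S² - Q) / 2`, so twice the quantity equals
`(n + 1 - S)² + Q - (n + 1)`. The `n - 2` numbers `n + 1 - S, d₁, …, d_{n-3}` add up to `n + 1`,
so by Cauchy–Schwarz their squares add up to at least `(n + 1)² / (n - 2) > n + 1`.
-/

open Finset

theorem sq_sum_eq_sum_sq_add_two_mul_sum_mul_of_lt {ι R : Type*} [LinearOrder ι] [Fintype ι]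
    [CommSemiring R] (f : ι → R) :
    (∑ i, f i) ^ 2 =
      ∑ i, f i ^ 2 + 2 * ∑ p ∈ univ.filter (fun p : ι × ι => p.1 < p.2), f p.1 * f p.2 := by
  set g : ι × ι → R := fun p => f p.1 * f p.2
  have hsq : (∑ i, f i) ^ 2 = ∑ p, g p := by
    rw [sq, Fintype.sum_mul_sum, Fintype.sum_prod_type]
  have hsplit : ∑ p, g p = ∑ p ∈ univ.filter (fun p : ι × ι => p.1 < p.2), g p +
      ∑ p ∈ univ.filter (fun p : ι × ι => p.1 = p.2), g p +
      ∑ p ∈ univ.filter (fun p : ι × ι => p.2 < p.1), g p := by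
    simp only [sum_filter, ← sum_add_distrib]
    refine sum_congr rfl fun p _ => ?_
    rcases lt_trichotomy p.1 p.2 with h | h | h
    · simp [h, h.ne, h.not_gt]
    · simp [h]
    · simp [h, h.ne', h.not_gt]
  have hdiag : ∑ p ∈ univ.filter (fun p : ι × ι => p.1 = p.2), g p = ∑ i, f i ^ 2 := by
    simp [g, sum_filter, Fintype.sum_prod_type, sq]
  have hswap : ∑ p ∈ univ.filter (fun p : ι × ι => p.2 < p.1), g p =
      ∑ p ∈ univ.filter (fun p : ι × ι => p.1 < p.2), g p :=
    sum_equiv (Equiv.prodComm ι ι) (by simp) (by simp [g, mul_comm])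
  rw [hsq, hsplit, hdiag, hswap]
  ring

theorem lt_sq_sub_sum_add_sum_sq {ι R : Type*} [Fintype ι] [Field R] [LinearOrder R]
    [IsStrictOrderedRing R] (f : ι → R) {c : R} (hc : (Fintype.card ι : R) + 1 < c) :
    c < (c - ∑ i, f i) ^ 2 + ∑ i, f i ^ 2 := by
  set g : Option ι → R := fun o => o.elim (c - ∑ i, f i) f
  have hsum : ∑ o, g o = c := by simp [g, Fintype.sum_option]
  have hsq : ∑ o, g o ^ 2 = (c - ∑ i, f i) ^ 2 + ∑ i, f i ^ 2 := by
    simp [g, Fintype.sum_option]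
  have hcs := sq_sum_le_card_mul_sum_sq (s := univ) (f := g)
  rw [hsum, hsq, card_univ, Fintype.card_option, Nat.cast_succ] at hcs
  have hk : (0 : R) ≤ Fintype.card ι := Nat.cast_nonneg _
  nlinarith

theorem stmt_6_general (n : ℕ) (hn : 4 ≤ n) (d : Fin (n - 3) → ℤ) :
    (n : ℝ) * (n + 1) / 2 -
        (∑ p ∈ Finset.univ.filter (fun p : Fin (n - 3) × Fin (n - 3) => p.1 < p.2),
          ((d p.1 : ℝ) * (d p.2 : ℝ))) -
        ((n : ℝ) + 1) * (∑ j, (d j : ℝ)) + (∑ j, (d j : ℝ)) ^ 2 > 0 := by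
  have hcard : (Fintype.card (Fin (n - 3)) : ℝ) + 1 < n + 1 := by
    rw [Fintype.card_fin]
    exact_mod_cast (by omega : n - 3 + 1 < n + 1)
  have hpairs := sq_sum_eq_sum_sq_add_two_mul_sum_mul_of_lt fun j => (d j : ℝ)
  have hcs := lt_sq_sub_sum_add_sum_sq (fun j => (d j : ℝ)) hcard
  linear_combination (1 / 2 : ℝ) * hcs - (1 / 2 : ℝ) * hpairs

theorem stmt_6 (n : ℕ) (hn : 4 ≤ n) (d : Fin (n - 3) → ℤ) (hd : ∀ j, 0 < d j) :
    (n : ℝ) * (n + 1) / 2 -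
        (∑ p ∈ Finset.univ.filter (fun p : Fin (n - 3) × Fin (n - 3) => p.1 < p.2),
          ((d p.1 : ℝ) * (d p.2 : ℝ))) -
        ((n : ℝ) + 1) * (∑ j, (d j : ℝ)) + (∑ j, (d j : ℝ)) ^ 2 > 0 :=
  stmt_6_general n hn d
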